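/- De Haan's Gumbel domain-of-attraction theorem: Let F be a distribution function with upper end-point x₊ (possibly ∞). Then F ∈ D(Λ) if and only if there exists a function a, positive on (−∞, x₊), such that F̄(t + x a(t))/F̄(t) → e^{−x} as t ↑ x₊, for every x ∈ ℝ. -/

import Mathlib

open Filter Topology

/-- A (cumulative) distribution function on ℝ. -/
def IsDistFun (F : ℝ → ℝ) : Prop :=
  Monotone F ∧ (∀ x, ContinuousWithinAt F (Set.Ici x) x) ∧
    Tendsto F atBot (𝓝 0) ∧ Tendsto F atTop (𝓝 1)

/-- `F` lies in the domain of attraction of `G`. -/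
def MemDomAttr (F G : ℝ → ℝ) : Prop :=
  ∃ a b : ℕ → ℝ, (∀ n, 0 < a n) ∧
    ∀ x : ℝ, ContinuousAt G x →
      Tendsto (fun n => F (a n * x + b n) ^ n) atTop (𝓝 (G x))

/-- The Gumbel law `Λ`. -/
noncomputable def gumbel (x : ℝ) : ℝ :=
  Real.exp (-Real.exp (-x))

open Classical in
/-- The filter of approach `t ↑ x₊` to the upper end-point
`x₊ = sup {x | F x < 1}` of `F`: convergence from the left if `x₊` is finite,
convergence to `+∞` if `x₊ = ∞`. -/
noncomputable def upperEndFilter (F : ℝ → ℝ) : Filter ℝ :=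
  if BddAbove {x | F x < 1} then 𝓝[<] (sSup {x | F x < 1}) else atTop

/-!
Write `F̄ = 1 - F`. Since `log F(y)ⁿ ≈ -n F̄(y)` when `F̄(y)` is small, `F ∈ D(Λ)` with constants
`aₙ, bₙ` amounts to `n F̄(aₙ x + bₙ) → e^{-x}` for every `x`.

Given an auxiliary function `a`, take for `bₙ` the quantile `qₙ` at tail level `1/(n+2)` and
`aₙ = a(qₙ)`: the ratio condition at `x < 0` prevents `F̄` from jumping at the scale `a`, so
`n F̄(qₙ) → 1`, and multiplying by the ratio at `t = qₙ` gives the normalisation.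

Conversely, as `F̄` is antitone and `e^{-x}` strictly decreasing and continuous, the limits
`n F̄(yₙ) → e^{-x}` and `(yₙ - bₙ)/aₙ → x` are equivalent (convergence of types). Hence `bₙ` may be
replaced by `qₙ`, and `q_{n+1} - qₙ = o(aₙ)`. Setting `a(t) = aₙ` for `t ∈ [qₙ, q_{n+1})`, the ratio
`F̄(t + x a(t)) / F̄(t)` is squeezed between the corresponding ratios at `qₙ` and `q_{n+1}`, both of
which tend to `e^{-x}`.
-/

section AntitoneFamily

variable {ι : Type*} {l : Filter ι} {g : ι → ℝ → ℝ} {φ : ℝ → ℝ} {y : ι → ℝ} {x : ℝ}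

theorem tendsto_apply_of_antitone (hg : ∀ i, Antitone (g i))
    (hlim : ∀ z, Tendsto (fun i => g i z) l (𝓝 (φ z))) (hφ : ContinuousAt φ x)
    (hy : Tendsto y l (𝓝 x)) : Tendsto (fun i => g i (y i)) l (𝓝 (φ x)) := by
  refine tendsto_order.2 ⟨fun c hc => ?_, fun c hc => ?_⟩
  · obtain ⟨z, hxz, hcz⟩ := (hφ.eventually (eventually_gt_nhds hc)).exists_gt
    filter_upwards [hy.eventually (eventually_lt_nhds hxz),
      (hlim z).eventually (eventually_gt_nhds hcz)] with i hyz hgz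
    exact hgz.trans_le (hg i hyz.le)
  · obtain ⟨z, hzx, hcz⟩ := (hφ.eventually (eventually_lt_nhds hc)).exists_lt
    filter_upwards [hy.eventually (eventually_gt_nhds hzx),
      (hlim z).eventually (eventually_lt_nhds hcz)] with i hzy hgz
    exact (hg i hzy.le).trans_lt hgz

theorem tendsto_of_tendsto_apply_of_antitone (hg : ∀ i, Antitone (g i))
    (hlim : ∀ z, Tendsto (fun i => g i z) l (𝓝 (φ z))) (hφ : StrictAnti φ)
    (hy : Tendsto (fun i => g i (y i)) l (𝓝 (φ x))) : Tendsto y l (𝓝 x) := by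
  refine tendsto_order.2 ⟨fun c hc => ?_, fun c hc => ?_⟩
  · obtain ⟨m, hxm, hmc⟩ := exists_between (hφ hc)
    filter_upwards [hy.eventually (eventually_lt_nhds hxm),
      (hlim c).eventually (eventually_gt_nhds hmc)] with i h1 h2
    exact (hg i).reflect_lt (h1.trans h2)
  · obtain ⟨m, hcm, hmx⟩ := exists_between (hφ hc)
    filter_upwards [hy.eventually (eventually_gt_nhds hmx),
      (hlim c).eventually (eventually_lt_nhds hcm)] with i h1 h2
    exact (hg i).reflect_lt (h2.trans h1)

end AntitoneFamily

theorem tendsto_zero_of_tendsto_natCast_add_mul {u : ℕ → ℝ} {c j : ℝ}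
    (h : Tendsto (fun n : ℕ => ((n : ℝ) + j) * u n) atTop (𝓝 c)) : Tendsto u atTop (𝓝 0) := by
  have hnj : Tendsto (fun n : ℕ => (n : ℝ) + j) atTop atTop :=
    tendsto_atTop_add_const_right _ j tendsto_natCast_atTop_atTop
  refine (h.div_atTop hnj).congr' ?_
  filter_upwards [hnj.eventually_gt_atTop 0] with n hn
  field_simp

theorem tendsto_natCast_add_mul_of_tendsto {u : ℕ → ℝ} {c j : ℝ} (k : ℝ)
    (h : Tendsto (fun n : ℕ => ((n : ℝ) + j) * u n) atTop (𝓝 c)) :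
    Tendsto (fun n : ℕ => ((n : ℝ) + k) * u n) atTop (𝓝 c) := by
  have h' := h.add ((tendsto_zero_of_tendsto_natCast_add_mul h).const_mul (k - j))
  rw [mul_zero, add_zero] at h'
  exact h'.congr fun n => by ring

theorem tendsto_div_of_tendsto_natCast_mul {u v : ℕ → ℝ} {c d : ℝ}
    (hu : Tendsto (fun n : ℕ => (n : ℝ) * u n) atTop (𝓝 c))
    (hv : Tendsto (fun n : ℕ => (n : ℝ) * v n) atTop (𝓝 d)) (hd : d ≠ 0) :
    Tendsto (fun n => u n / v n) atTop (𝓝 (c / d)) := by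
  refine (hu.div hv hd).congr' ?_
  filter_upwards [eventually_ne_atTop 0] with n hn
  exact mul_div_mul_left _ _ (Nat.cast_ne_zero.2 hn)

theorem strictAnti_exp_neg : StrictAnti fun x : ℝ => Real.exp (-x) :=
  Real.exp_strictMono.comp_strictAnti fun _ _ h => neg_lt_neg h

theorem tendsto_one_sub_pow_iff {u : ℕ → ℝ} {c : ℝ} (hu : ∀ n, u n ≤ 1) :
    Tendsto (fun n => (1 - u n) ^ n) atTop (𝓝 (Real.exp (-c))) ↔
      Tendsto (fun n : ℕ => (n : ℝ) * u n) atTop (𝓝 c) := by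
  refine ⟨fun h => ?_, fun h => by
    simpa [sub_eq_add_neg] using Real.tendsto_one_add_pow_exp_of_tendsto (g := fun n => -u n)
      (by simpa using h.neg)⟩
  -- `max 0` keeps the family antitone in `v` on all of `ℝ`, not only on `[0, n]`
  set g : ℕ → ℝ → ℝ := fun n v => max 0 (1 - v / n) ^ n
  refine tendsto_of_tendsto_apply_of_antitone (g := g) (fun n v w hvw => ?_) (fun v => ?_)
    strictAnti_exp_neg (h.congr' ?_)
  · exact pow_le_pow_left₀ (le_max_left _ _)
      (max_le_max le_rfl (sub_le_sub_left (div_le_div_of_nonneg_right hvw n.cast_nonneg) _)) n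
  · refine (Real.tendsto_one_add_div_pow_exp (-v)).congr' ?_
    filter_upwards [eventually_gt_atTop ⌈v⌉₊] with n hn
    have hvn : v / n ≤ 1 :=
      div_le_one_of_le₀ ((Nat.le_ceil v).trans (by exact_mod_cast hn.le)) n.cast_nonneg
    simp only [g, max_eq_right (sub_nonneg.2 hvn), neg_div, ← sub_eq_add_neg]
  · filter_upwards [eventually_ne_atTop 0] with n hn
    simp only [g, mul_div_cancel_left₀ _ (Nat.cast_ne_zero.2 hn : (n : ℝ) ≠ 0),
      max_eq_right (sub_nonneg.2 (hu n))]

namespace IsDistFun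

variable {F : ℝ → ℝ} (hF : IsDistFun F)
include hF

theorem nonneg (x : ℝ) : 0 ≤ F x :=
  le_of_tendsto hF.2.2.1 ((eventually_le_atBot x).mono fun _ hy => hF.1 hy)

theorem le_one (x : ℝ) : F x ≤ 1 :=
  ge_of_tendsto hF.2.2.2 ((eventually_ge_atTop x).mono fun _ hy => hF.1 hy)

theorem exists_gt_lt_one {y : ℝ} (hy : F y < 1) : ∃ t, y < t ∧ F t < 1 := by
  obtain ⟨t, ht, hyt⟩ := ((((hF.2.1 y).mono Set.Ioi_subset_Ici_self).eventually
    (eventually_lt_nhds hy)).and self_mem_nhdsWithin).exists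
  exact ⟨t, hyt, ht⟩

theorem lt_one_iff_lt_sSup (hb : BddAbove {x | F x < 1}) {t : ℝ} :
    F t < 1 ↔ t < sSup {x | F x < 1} := by
  refine ⟨fun ht => ?_, fun ht => ?_⟩
  · obtain ⟨u, htu, hu⟩ := hF.exists_gt_lt_one ht
    exact htu.trans_le (le_csSup hb hu)
  · have hne : {x | F x < 1}.Nonempty := (hF.2.2.1.eventually (eventually_lt_nhds one_pos)).exists
    obtain ⟨s, hs, hts⟩ := exists_lt_of_lt_csSup hne ht
    exact (hF.1 hts.le).trans_lt hs

theorem lt_one_of_not_bddAbove (hb : ¬BddAbove {x | F x < 1}) (t : ℝ) : F t < 1 := by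
  obtain ⟨s, hs, hts⟩ := not_bddAbove_iff.1 hb t
  exact (hF.1 hts.le).trans_lt hs

theorem upperEndFilter_hasBasis :
    (upperEndFilter F).HasBasis (fun y => F y < 1) fun y => {t | y < t ∧ F t < 1} := by
  unfold upperEndFilter
  split_ifs with hb
  · refine (nhdsLT_basis _).congr (fun y => (hF.lt_one_iff_lt_sSup hb).symm) fun y _ => ?_
    ext t
    exact and_congr_right' (hF.lt_one_iff_lt_sSup hb).symm
  · refine atTop_basis_Ioi.congr (fun y => iff_of_true trivial (hF.lt_one_of_not_bddAbove hb y))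
      fun y _ => ?_
    ext t
    exact (and_iff_left (hF.lt_one_of_not_bddAbove hb t)).symm

theorem upperEndFilter_neBot : (upperEndFilter F).NeBot :=
  hF.upperEndFilter_hasBasis.neBot_iff.2 fun hy => hF.exists_gt_lt_one hy

theorem eventually_upperEndFilter {y : ℝ} (hy : F y < 1) :
    ∀ᶠ t in upperEndFilter F, y < t ∧ F t < 1 :=
  hF.upperEndFilter_hasBasis.mem_of_mem hy

theorem eventually_lt_one : ∀ᶠ t in upperEndFilter F, F t < 1 := by
  obtain ⟨y, hy⟩ := (hF.2.2.1.eventually (eventually_lt_nhds one_pos)).exists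
  exact (hF.eventually_upperEndFilter hy).mono fun _ ht => ht.2

end IsDistFun

noncomputable def tailQuantile (F : ℝ → ℝ) (p : ℝ) : ℝ :=
  sInf {t | 1 - F t ≤ p}

theorem IsDistFun.tailQuantile_le_iff {F : ℝ → ℝ} (hF : IsDistFun F) {p t : ℝ} (hp0 : 0 < p)
    (hp1 : p < 1) : tailQuantile F p ≤ t ↔ 1 - F t ≤ p := by
  have hne : {t | 1 - F t ≤ p}.Nonempty :=
    (hF.2.2.2.eventually (eventually_gt_nhds (by linarith : 1 - p < 1))).exists.imp
      fun t ht => show 1 - F t ≤ p by linarith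
  have hbdd : BddBelow {t | 1 - F t ≤ p} := by
    obtain ⟨s, hs⟩ := (hF.2.2.1.eventually (eventually_lt_nhds (by linarith : 0 < 1 - p))).exists
    exact ⟨s, fun t (ht : 1 - F t ≤ p) => (hF.1.reflect_lt (by linarith)).le⟩
  refine ⟨fun h => ?_, csInf_le hbdd⟩
  -- right-continuity at the quantile: `F ≥ 1 - p` just to its right, hence at it
  have hQ : 1 - p ≤ F (tailQuantile F p) := by
    refine ge_of_tendsto ((hF.2.1 _).mono Set.Ioi_subset_Ici_self) ?_
    filter_upwards [self_mem_nhdsWithin] with s hs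
    obtain ⟨u, hu, hus⟩ := exists_lt_of_csInf_lt hne hs
    linarith [hF.1 hus.le, show 1 - F u ≤ p from hu]
  linarith [hF.1 h]

-- The level `1 / (n + 2)` lies in `(0, 1)` for every `n`, so no term is a junk value.
noncomputable def quantileSeq (F : ℝ → ℝ) (n : ℕ) : ℝ :=
  tailQuantile F ((n : ℝ) + 2)⁻¹

namespace IsDistFun

variable {F : ℝ → ℝ} (hF : IsDistFun F)
include hF

theorem quantileSeq_le_iff (n : ℕ) {t : ℝ} :
    quantileSeq F n ≤ t ↔ ((n : ℝ) + 2) * (1 - F t) ≤ 1 := by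
  have hn : (0 : ℝ) < n + 2 := by positivity
  rw [quantileSeq, hF.tailQuantile_le_iff (inv_pos.2 hn) (inv_lt_one_of_one_lt₀ (by linarith)),
    ← one_div, le_div_iff₀ hn, mul_comm]

theorem lt_quantileSeq_iff (n : ℕ) {t : ℝ} :
    t < quantileSeq F n ↔ 1 < ((n : ℝ) + 2) * (1 - F t) := by
  simpa only [not_le] using (hF.quantileSeq_le_iff n).not

theorem quantileSeq_monotone : Monotone (quantileSeq F) := fun m n hmn =>
  (hF.quantileSeq_le_iff m).2 <| (mul_le_mul_of_nonneg_right (by gcongr)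
    (sub_nonneg.2 (hF.le_one _))).trans ((hF.quantileSeq_le_iff n).1 le_rfl)

theorem eventually_quantileSeq_gt {t : ℝ} (ht : F t < 1) : ∀ᶠ n in atTop, t < quantileSeq F n := by
  have h : Tendsto (fun n : ℕ => ((n : ℝ) + 2) * (1 - F t)) atTop atTop :=
    (tendsto_atTop_add_const_right _ 2 tendsto_natCast_atTop_atTop).atTop_mul_const (by linarith)
  exact (h.eventually_gt_atTop 1).mono fun n hn => (hF.lt_quantileSeq_iff n).2 hn

theorem eventually_lt_quantileSeq_of_tendsto {y : ℕ → ℝ} {c : ℝ}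
    (h : Tendsto (fun n : ℕ => (n : ℝ) * (1 - F (y n))) atTop (𝓝 c)) (hc : 1 < c) :
    ∀ᶠ n in atTop, y n < quantileSeq F n :=
  ((tendsto_natCast_add_mul_of_tendsto (j := 0) 2 (by simpa using h)).eventually
    (eventually_gt_nhds hc)).mono fun n hn => (hF.lt_quantileSeq_iff n).2 hn

theorem eventually_quantileSeq_le_of_tendsto {y : ℕ → ℝ} {c : ℝ}
    (h : Tendsto (fun n : ℕ => (n : ℝ) * (1 - F (y n))) atTop (𝓝 c)) (hc : c < 1) :
    ∀ᶠ n in atTop, quantileSeq F n ≤ y n :=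
  ((tendsto_natCast_add_mul_of_tendsto (j := 0) 2 (by simpa using h)).eventually
    (eventually_lt_nhds hc)).mono fun n hn => (hF.quantileSeq_le_iff n).2 hn.le

variable (htail : ∀ ε > 0, ∃ t, F t < 1 ∧ 1 - F t ≤ ε)
include htail

theorem quantileSeq_lt_one (n : ℕ) : F (quantileSeq F n) < 1 := by
  have hn : (0 : ℝ) < n + 2 := by positivity
  obtain ⟨t, ht, htn⟩ := htail _ (inv_pos.2 hn)
  refine (hF.1 ((hF.quantileSeq_le_iff n).2 ?_)).trans_lt ht
  rwa [← one_div, le_div_iff₀ hn, mul_comm] at htn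

theorem tendsto_quantileSeq : Tendsto (quantileSeq F) atTop (upperEndFilter F) :=
  hF.upperEndFilter_hasBasis.tendsto_right_iff.2 fun _ hy =>
    (hF.eventually_quantileSeq_gt hy).mono fun n hn => ⟨hn, hF.quantileSeq_lt_one htail n⟩

end IsDistFun

def IsGumbelNormalization (F : ℝ → ℝ) (a b : ℕ → ℝ) : Prop :=
  ∀ x : ℝ, Tendsto (fun n : ℕ => (n : ℝ) * (1 - F (a n * x + b n))) atTop (𝓝 (Real.exp (-x)))

theorem memDomAttr_gumbel_iff {F : ℝ → ℝ} (hF : IsDistFun F) :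
    MemDomAttr F gumbel ↔ ∃ a b : ℕ → ℝ, (∀ n, 0 < a n) ∧ IsGumbelNormalization F a b := by
  have hcont : Continuous gumbel := by unfold gumbel; fun_prop
  have key : ∀ (a b : ℕ → ℝ) (x : ℝ),
      Tendsto (fun n => F (a n * x + b n) ^ n) atTop (𝓝 (gumbel x)) ↔
        Tendsto (fun n : ℕ => (n : ℝ) * (1 - F (a n * x + b n))) atTop (𝓝 (Real.exp (-x))) :=
    fun a b x => by
      simpa [gumbel] using tendsto_one_sub_pow_iff (u := fun n => 1 - F (a n * x + b n))
        (c := Real.exp (-x)) fun n => by linarith [hF.nonneg (a n * x + b n)]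
  simp only [MemDomAttr, IsGumbelNormalization, key, hcont.continuousAt, forall_const]

namespace IsGumbelNormalization

variable {F : ℝ → ℝ} {a b : ℕ → ℝ} (h : IsGumbelNormalization F a b)
include h

theorem exists_tail_le : ∀ ε > 0, ∃ t, F t < 1 ∧ 1 - F t ≤ ε := by
  intro ε hε
  have h0 : Tendsto (fun n : ℕ => ((n : ℝ) + 0) * (1 - F (b n))) atTop (𝓝 1) := by
    simpa using h 0
  obtain ⟨n, hpos, hle⟩ := ((h0.eventually (eventually_gt_nhds one_pos)).and
    ((tendsto_zero_of_tendsto_natCast_add_mul h0).eventually (eventually_le_nhds hε))).exists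
  exact ⟨b n, by nlinarith [n.cast_nonneg (α := ℝ)], hle⟩

variable (hF : IsDistFun F) (ha : ∀ n, 0 < a n)
include hF ha

theorem tendsto_iff {y : ℕ → ℝ} {x : ℝ} :
    Tendsto (fun n : ℕ => (n : ℝ) * (1 - F (y n))) atTop (𝓝 (Real.exp (-x))) ↔
      Tendsto (fun n => (y n - b n) / a n) atTop (𝓝 x) := by
  set g : ℕ → ℝ → ℝ := fun n z => n * (1 - F (a n * z + b n))
  have hg : ∀ n, Antitone (g n) := fun n z w hzw =>
    mul_le_mul_of_nonneg_left (sub_le_sub_left (hF.1 (by gcongr; exact (ha n).le)) 1) n.cast_nonneg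
  have hgy : ∀ n, g n ((y n - b n) / a n) = n * (1 - F (y n)) := fun n => by
    simp only [g, mul_div_cancel₀ _ (ha n).ne', sub_add_cancel]
  simp only [← hgy]
  exact ⟨tendsto_of_tendsto_apply_of_antitone (φ := fun x => Real.exp (-x)) hg h strictAnti_exp_neg,
    tendsto_apply_of_antitone (φ := fun x => Real.exp (-x)) hg h (by fun_prop)⟩

theorem tendsto_quantileSeq_sub_div :
    Tendsto (fun n => (quantileSeq F n - b n) / a n) atTop (𝓝 0) := by
  refine tendsto_order.2 ⟨fun c hc => ?_, fun c hc => ?_⟩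
  · filter_upwards [hF.eventually_lt_quantileSeq_of_tendsto (h c)
      (Real.one_lt_exp_iff.2 (neg_pos.2 hc))] with n hn
    rw [lt_div_iff₀ (ha n)]
    linarith
  · filter_upwards [hF.eventually_quantileSeq_le_of_tendsto (h (c / 2))
      (Real.exp_lt_one_iff.2 (by linarith))] with n hn
    rw [div_lt_iff₀ (ha n)]
    nlinarith [ha n]

theorem isGumbelNormalization_quantileSeq : IsGumbelNormalization F a (quantileSeq F) := fun x =>
  (h.tendsto_iff hF ha).2 <| by
    simpa using ((h.tendsto_quantileSeq_sub_div hF ha).const_add x).congr fun n => by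
      field_simp [(ha n).ne']
      ring

theorem tendsto_succ_add (x : ℝ) :
    Tendsto (fun n : ℕ => (n : ℝ) * (1 - F (b (n + 1) + x * a n))) atTop (𝓝 (Real.exp (-x))) := by
  have h1 : Tendsto (fun n : ℕ => ((n : ℝ) + 1) * (1 - F (b (n + 1)))) atTop
      (𝓝 (Real.exp (-0))) := by
    simpa [Function.comp_def] using (h 0).comp (tendsto_add_atTop_nat 1)
  have hb : Tendsto (fun n => (b (n + 1) - b n) / a n) atTop (𝓝 0) :=
    (h.tendsto_iff hF ha).1 (by simpa using tendsto_natCast_add_mul_of_tendsto 0 h1)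
  refine (h.tendsto_iff hF ha).2 ?_
  simpa using (hb.add_const x).congr fun n => by
    field_simp [(ha n).ne']
    ring

end IsGumbelNormalization

def IsGumbelAuxFun (F a : ℝ → ℝ) : Prop :=
  ∀ x : ℝ, Tendsto (fun t => (1 - F (t + x * a t)) / (1 - F t)) (upperEndFilter F)
    (𝓝 (Real.exp (-x)))

namespace IsGumbelAuxFun

variable {F a : ℝ → ℝ} (h : IsGumbelAuxFun F a) (hF : IsDistFun F)
include h hF

theorem exists_tail_le : ∀ ε > 0, ∃ t, F t < 1 ∧ 1 - F t ≤ ε := by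
  intro ε hε
  by_contra! hbig
  obtain ⟨x, hx⟩ := (Real.tendsto_exp_neg_atTop_nhds_zero.eventually (eventually_lt_nhds hε)).exists
  have := hF.upperEndFilter_neBot
  obtain ⟨t, ⟨hpos, hlt⟩, ht⟩ := (((h x).eventually
    (Ioo_mem_nhds (Real.exp_pos (-x)) hx)).and hF.eventually_lt_one).exists
  have hs : F (t + x * a t) < 1 := by
    by_contra! hs
    rw [le_antisymm (hF.le_one _) hs, sub_self, zero_div] at hpos
    exact hpos.false
  have hratio : 1 - F (t + x * a t) ≤ (1 - F (t + x * a t)) / (1 - F t) :=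
    le_div_self (sub_nonneg.2 (hF.le_one _)) (sub_pos.2 ht) (by linarith [hF.nonneg t])
  linarith [hbig _ hs]

variable (ha : ∀ t, F t < 1 → 0 < a t)
include ha

theorem tendsto_mul_tail_quantileSeq :
    Tendsto (fun n : ℕ => (n : ℝ) * (1 - F (quantileSeq F n))) atTop (𝓝 1) := by
  have htail := h.exists_tail_le hF
  set q := quantileSeq F
  suffices Tendsto (fun n : ℕ => ((n : ℝ) + 2) * (1 - F (q n))) atTop (𝓝 1) by
    simpa using tendsto_natCast_add_mul_of_tendsto 0 this
  refine tendsto_order.2 ⟨fun c hc => ?_, fun c hc => Eventually.of_forall fun n =>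
    ((hF.quantileSeq_le_iff n).1 le_rfl).trans_lt hc⟩
  obtain ⟨s, hs, hcs⟩ : ∃ s > 0, c < Real.exp (-s) :=
    ((by fun_prop : Continuous fun s => Real.exp (-s)).continuousAt.eventually
      (eventually_gt_nhds (by simpa using hc))).exists_gt
  have hr : Tendsto (fun n => (1 - F (q n)) / (1 - F (q n + -s * a (q n)))) atTop
      (𝓝 (Real.exp (-s))) := by
    simpa [Function.comp_def, Real.exp_neg] using
      ((h (-s)).comp (hF.tendsto_quantileSeq htail)).inv₀ (Real.exp_pos _).ne'
  -- `(n + 2) F̄(q n) ≥ F̄(q n) / F̄(q n - s a(q n))`, as left of `q n` the tail exceeds `1 / (n + 2)`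
  filter_upwards [hr.eventually (eventually_gt_nhds hcs)] with n hn
  have hlt : 1 < ((n : ℝ) + 2) * (1 - F (q n + -s * a (q n))) :=
    (hF.lt_quantileSeq_iff n).1 (by nlinarith [ha _ (hF.quantileSeq_lt_one htail n)])
  have hpos : 0 < 1 - F (q n + -s * a (q n)) :=
    pos_of_mul_pos_right (one_pos.trans hlt) (by positivity)
  refine hn.trans_le ?_
  rw [div_le_iff₀ hpos]
  nlinarith [sub_nonneg.2 (hF.le_one (q n))]

theorem isGumbelNormalization :
    IsGumbelNormalization F (fun n => a (quantileSeq F n)) (quantileSeq F) := by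
  have htail := h.exists_tail_le hF
  intro x
  have hlim :=
    ((h x).comp (hF.tendsto_quantileSeq htail)).mul (h.tendsto_mul_tail_quantileSeq hF ha)
  rw [mul_one] at hlim
  refine hlim.congr fun n => ?_
  have hq : 1 - F (quantileSeq F n) ≠ 0 := (sub_pos.2 (hF.quantileSeq_lt_one htail n)).ne'
  simp only [Function.comp_apply]
  field_simp
  ring_nf

end IsGumbelAuxFun

open Classical in
noncomputable def bracketIndex (q : ℕ → ℝ) (t : ℝ) : ℕ :=
  if h : ∃ n, q n ≤ t ∧ t < q (n + 1) then h.choose else 0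

section Bracket

variable {q : ℕ → ℝ} {t : ℝ}

theorem exists_bracket (h0 : q 0 ≤ t) {m : ℕ} (hm : t < q m) : ∃ n, q n ≤ t ∧ t < q (n + 1) := by
  induction m with
  | zero => exact absurd h0 hm.not_ge
  | succ m ih =>
    by_cases htm : t < q m
    · exact ih htm
    · exact ⟨m, not_lt.1 htm, hm⟩

theorem bracketIndex_spec (h0 : q 0 ≤ t) {m : ℕ} (hm : t < q m) :
    q (bracketIndex q t) ≤ t ∧ t < q (bracketIndex q t + 1) := by
  have h := exists_bracket h0 hm
  rw [bracketIndex, dif_pos h]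
  exact h.choose_spec

theorem tendsto_bracketIndex {l : Filter ℝ} (hq : Monotone q) (hle : ∀ K, ∀ᶠ t in l, q K ≤ t)
    (hlt : ∀ᶠ t in l, ∃ m, t < q m) : Tendsto (bracketIndex q) l atTop := by
  refine tendsto_atTop.2 fun K => ?_
  filter_upwards [hle 0, hle K, hlt] with t h0 hK ⟨m, hm⟩
  by_contra! hKt
  exact ((hq hKt).trans hK).not_gt (bracketIndex_spec h0 hm).2

end Bracket

theorem IsGumbelNormalization.isGumbelAuxFun {F : ℝ → ℝ} {a : ℕ → ℝ}
    (h : IsGumbelNormalization F a (quantileSeq F)) (hF : IsDistFun F) (ha : ∀ n, 0 < a n)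
    (htail : ∀ ε > 0, ∃ t, F t < 1 ∧ 1 - F t ≤ ε) :
    IsGumbelAuxFun F fun t => a (bracketIndex (quantileSeq F) t) := by
  set q := quantileSeq F
  set N := bracketIndex q
  have hq1 := hF.quantileSeq_lt_one htail
  have hbracket : ∀ᶠ t in upperEndFilter F, q (N t) ≤ t ∧ t < q (N t + 1) ∧ F t < 1 := by
    filter_upwards [hF.eventually_upperEndFilter (hq1 0)] with t ⟨h0, ht⟩
    obtain ⟨m, hm⟩ := (hF.eventually_quantileSeq_gt ht).exists
    exact ⟨(bracketIndex_spec h0.le hm).1, (bracketIndex_spec h0.le hm).2, ht⟩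
  have hN : Tendsto N (upperEndFilter F) atTop :=
    tendsto_bracketIndex hF.quantileSeq_monotone
      (fun K => (hF.eventually_upperEndFilter (hq1 K)).mono fun _ ht => ht.1.le)
      (hF.eventually_lt_one.mono fun _ ht => (hF.eventually_quantileSeq_gt ht).exists)
  intro x
  have hlo : Tendsto (fun n => (1 - F (q (n + 1) + x * a n)) / (1 - F (q n))) atTop
      (𝓝 (Real.exp (-x))) := by
    simpa using tendsto_div_of_tendsto_natCast_mul (h.tendsto_succ_add hF ha x) (by simpa using h 0)
      one_ne_zero
  have hhi : Tendsto (fun n => (1 - F (q n + x * a n)) / (1 - F (q (n + 1)))) atTop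
      (𝓝 (Real.exp (-x))) := by
    simpa using tendsto_div_of_tendsto_natCast_mul (by simpa [add_comm, mul_comm] using h x)
      (by simpa using h.tendsto_succ_add hF ha 0) one_ne_zero
  refine tendsto_of_tendsto_of_tendsto_of_le_of_le' (hlo.comp hN) (hhi.comp hN) ?_ ?_
  · filter_upwards [hbracket] with t ⟨hqt, htq, ht⟩
    refine div_le_div₀ (sub_nonneg.2 (hF.le_one _)) ?_ (sub_pos.2 ht) (by linarith [hF.1 hqt])
    linarith [hF.1 (by linarith : t + x * a (N t) ≤ q (N t + 1) + x * a (N t))]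
  · filter_upwards [hbracket] with t ⟨hqt, htq, ht⟩
    refine div_le_div₀ (sub_nonneg.2 (hF.le_one _)) ?_ (sub_pos.2 (hq1 _))
      (by linarith [hF.1 htq.le])
    linarith [hF.1 (by linarith : q (N t) + x * a (N t) ≤ t + x * a (N t))]

/-- **De Haan's Gumbel domain-of-attraction theorem.**  `F ∈ D(Λ)` iff there is
an auxiliary function `a`, positive on `(-∞, x₊)`, such that
`F̄(t + x a(t)) / F̄(t) → e^{-x}` as `t ↑ x₊`, for every `x ∈ ℝ`. -/
theorem deHaan_gumbel (F : ℝ → ℝ) (hF : IsDistFun F) :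
    MemDomAttr F gumbel ↔
      ∃ a : ℝ → ℝ, (∀ t, F t < 1 → 0 < a t) ∧
        ∀ x : ℝ, Tendsto (fun t => (1 - F (t + x * a t)) / (1 - F t))
          (upperEndFilter F) (𝓝 (Real.exp (-x))) := by
  rw [memDomAttr_gumbel_iff hF]
  constructor
  · rintro ⟨a, b, ha, h⟩
    exact ⟨_, fun t _ => ha _,
      (h.isGumbelNormalization_quantileSeq hF ha).isGumbelAuxFun hF ha h.exists_tail_le⟩
  · rintro ⟨a, ha, (h : IsGumbelAuxFun F a)⟩
    exact ⟨_, _, fun n => ha _ (hF.quantileSeq_lt_one (h.exists_tail_le hF) n),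
      h.isGumbelNormalization hF ha⟩
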